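/- Let p > 1, let Γ : ℝⁿ × ℝⁿ × (0,∞) → [0,∞) be measurable satisfying (K1) and (K2), and let u be a solution of the integral equation on ℝⁿ × (0,T) with initial data u₀ ≥ 0, where 0 < T ≤ ∞. Then there exists a constant C* depending only on p such that t^{1/(p−1)} ‖S(t)u₀w‖_{L^∞} ≤ C* for all t ∈ (0,T). -/

import Mathlib

open MeasureTheory Metric Set

/-- Case (A) or case (B) of the paper: the weight is `w(x) = |x₁|^α` with `0 ≤ α < 1`,
or `w(x) = |x|^α` with `0 ≤ α < n`. -/
def CaseAB (n : ℕ) (hn : 0 < n) (α : ℝ) (w : EuclideanSpace ℝ (Fin n) → ℝ) : Prop :=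
  (0 ≤ α ∧ α < 1 ∧ ∀ x, w x = |x ⟨0, hn⟩| ^ α) ∨
  (0 ≤ α ∧ (α : ℝ) < n ∧ ∀ x, w x = ‖x‖ ^ α)

/-- Property (K1): `∫ Γ(x,y,t) w(x) dx = ∫ Γ(x,y,t) w(y) dy = 1` for all `x, y, t > 0`. -/
def PropK1 {n : ℕ} (w : EuclideanSpace ℝ (Fin n) → ℝ)
    (Γ : EuclideanSpace ℝ (Fin n) → EuclideanSpace ℝ (Fin n) → ℝ → ℝ) : Prop :=
  ∀ (x y : EuclideanSpace ℝ (Fin n)) (t : ℝ), 0 < t →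
    (∫⁻ z, ENNReal.ofReal (Γ z y t * w z)) = 1 ∧ (∫⁻ z, ENNReal.ofReal (Γ x z t * w z)) = 1

/-- Property (K2): `Γ(x,y,t) = ∫ Γ(x,ξ,t-s) Γ(ξ,y,s) w(ξ) dξ` for all `x, y` and
`t > s > 0`. -/
def PropK2 {n : ℕ} (w : EuclideanSpace ℝ (Fin n) → ℝ)
    (Γ : EuclideanSpace ℝ (Fin n) → EuclideanSpace ℝ (Fin n) → ℝ → ℝ) : Prop :=
  ∀ (x y : EuclideanSpace ℝ (Fin n)) (s t : ℝ), 0 < s → s < t →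
    ENNReal.ofReal (Γ x y t) = ∫⁻ ξ, ENNReal.ofReal (Γ x ξ (t - s) * Γ ξ y s * w ξ)

/-- `u` is a (mild) solution of `∂ₜu - w⁻¹ div(w ∇u) = uᵖ`, `u(·,0) = u₀ ≥ 0`, on
`ℝⁿ × (0,T)`: `u` is nonnegative, measurable, essentially bounded on `ℝⁿ × (0,t)` for all
`t < T`, and for each `0 < t < T` and almost every `x`,
`u(x,t) = ∫ Γ(x,y,t) u₀(y) w(y) dy + ∫₀ᵗ ∫ Γ(x,y,t-s) u(y,s)ᵖ w(y) dy ds < ∞`. -/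
def IsSolOn (n : ℕ) (w : EuclideanSpace ℝ (Fin n) → ℝ)
    (Γ : EuclideanSpace ℝ (Fin n) → EuclideanSpace ℝ (Fin n) → ℝ → ℝ) (p : ℝ)
    (u₀ : EuclideanSpace ℝ (Fin n) → ℝ) (u : EuclideanSpace ℝ (Fin n) → ℝ → ℝ)
    (T : ENNReal) : Prop :=
  Measurable (Function.uncurry u) ∧
  (∀ x t, 0 ≤ u x t) ∧
  (∃ M : ℝ, ∀ t : ℝ, 0 < t → ENNReal.ofReal t < T →
    ∀ᵐ x ∂(volume : Measure (EuclideanSpace ℝ (Fin n))), u x t ≤ M) ∧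
  ∀ t : ℝ, 0 < t → ENNReal.ofReal t < T →
    ∀ᵐ x ∂(volume : Measure (EuclideanSpace ℝ (Fin n))),
      ENNReal.ofReal (u x t) =
        (∫⁻ y, ENNReal.ofReal (Γ x y t * u₀ y * w y)) +
        ∫⁻ s in Ioo (0 : ℝ) t, ∫⁻ y, ENNReal.ofReal (Γ x y (t - s) * u y s ^ p * w y)

open scoped ENNReal

lemma my_jensen {α : Type*} [MeasurableSpace α] (μ : Measure α)
    [IsProbabilityMeasure μ] {f : α → ℝ≥0∞} (hf : AEMeasurable f μ)
    {e : ℝ} (he : 1 ≤ e) : (∫⁻ a, f a ∂μ) ^ e ≤ ∫⁻ a, f a ^ e ∂μ := by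
  rcases he.eq_or_lt with heq | hlt
  · simp [← heq]
  · have hpq := Real.HolderConjugate.conjExponent hlt
    have h := ENNReal.lintegral_mul_le_Lp_mul_Lq μ hpq hf (aemeasurable_const (b := (1:ℝ≥0∞)))
    simp only [Pi.mul_apply, mul_one, ENNReal.one_rpow, lintegral_const, one_mul,
      measure_univ, ENNReal.one_rpow] at h
    have he0 : (0:ℝ) < e := lt_trans one_pos hlt
    calc (∫⁻ a, f a ∂μ) ^ e ≤ ((∫⁻ a, f a ^ e ∂μ) ^ (1/e)) ^ e :=
          ENNReal.rpow_le_rpow h he0.le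
      _ = ∫⁻ a, f a ^ e ∂μ := by
          rw [← ENNReal.rpow_mul, one_div, inv_mul_cancel₀ he0.ne', ENNReal.rpow_one]

noncomputable def dd (p : ℝ) (k : ℕ) : ℝ := (p ^ k - 1) / (p - 1)

noncomputable def cc (p : ℝ) : ℕ → ℝ
  | 0 => 1
  | k + 1 => cc p k ^ p / dd p (k + 1)

noncomputable def TT (p : ℝ) (k : ℕ) : ℝ :=
  ∑ j ∈ Finset.range k, Real.log (dd p (j + 1)) / p ^ (j + 1)

noncomputable def SS (p : ℝ) : ℝ :=
  Real.log p * (p / (p - 1) ^ 2) + |Real.log (p - 1)| * (p / (p - 1))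

variable {p : ℝ}

lemma dd_zero : dd p 0 = 0 := by simp [dd]

lemma dd_succ (hp : 1 < p) (k : ℕ) : dd p (k + 1) = p * dd p k + 1 := by
  have h : p - 1 ≠ 0 := by linarith
  unfold dd; field_simp; ring

lemma dd_nonneg (hp : 1 < p) (k : ℕ) : 0 ≤ dd p k := by
  apply div_nonneg _ (by linarith)
  have : (1:ℝ) ≤ p ^ k := one_le_pow₀ (by linarith)
  linarith

lemma dd_succ_one_le (hp : 1 < p) (k : ℕ) : 1 ≤ dd p (k + 1) := by
  have := dd_nonneg hp k
  have h := dd_succ hp k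
  nlinarith

lemma dd_succ_pos (hp : 1 < p) (k : ℕ) : 0 < dd p (k + 1) :=
  lt_of_lt_of_le one_pos (dd_succ_one_le hp k)

lemma cc_pos (hp : 1 < p) (k : ℕ) : 0 < cc p k := by
  induction k with
  | zero => norm_num [cc]
  | succ k ih =>
      exact div_pos (Real.rpow_pos_of_pos ih p) (dd_succ_pos hp k)

lemma log_cc (hp : 1 < p) (k : ℕ) : Real.log (cc p k) = -(p ^ k * TT p k) := by
  induction k with
  | zero => simp [cc, TT]
  | succ k ih =>
      have hpk : (0:ℝ) < p ^ (k + 1) := pow_pos (by linarith) _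
      rw [show cc p (k + 1) = cc p k ^ p / dd p (k + 1) from rfl,
        Real.log_div (Real.rpow_pos_of_pos (cc_pos hp k) p).ne' (dd_succ_pos hp k).ne',
        Real.log_rpow (cc_pos hp k), ih]
      have hTTs : TT p (k + 1) = TT p k + Real.log (dd p (k + 1)) / p ^ (k + 1) := by
        rw [TT, TT, Finset.sum_range_succ]
      rw [hTTs]
      field_simp
      ring

lemma TT_le (hp : 1 < p) (k : ℕ) : TT p k ≤ SS p := by
  have hp0 : (0:ℝ) < p := by linarith
  have hr0 : (0:ℝ) ≤ 1 / p := by positivity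
  have hr1 : 1 / p < 1 := by rw [div_lt_one hp0]; exact hp
  set A := |Real.log (p - 1)| with hA
  have hA0 : 0 ≤ A := abs_nonneg _
  have hlogp : 0 < Real.log p := Real.log_pos hp
  -- termwise bound
  have hterm : ∀ j : ℕ, Real.log (dd p (j + 1)) / p ^ (j + 1) ≤
      (Real.log p * ((j+1) * (1/p) ^ (j+1)) + A * (1/p) ^ (j+1)) := by
    intro j
    have hd1 : 1 ≤ dd p (j + 1) := dd_succ_one_le hp j
    have hdle : dd p (j + 1) ≤ p ^ (j + 1) / (p - 1) := by
      unfold dd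
      apply div_le_div_of_nonneg_right ?_ (by linarith)
      · linarith
    have hlog : Real.log (dd p (j + 1)) ≤ (j + 1) * Real.log p + A := by
      calc Real.log (dd p (j + 1)) ≤ Real.log (p ^ (j + 1) / (p - 1)) :=
            Real.log_le_log (by linarith) hdle
        _ = (j + 1) * Real.log p - Real.log (p - 1) := by
            rw [Real.log_div (by positivity) (by linarith), Real.log_pow]; push_cast; ring
        _ ≤ (j + 1) * Real.log p + A := by
            have : -Real.log (p-1) ≤ A := neg_le_abs _
            linarith
    have hpow : (0:ℝ) < p ^ (j + 1) := by positivity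
    rw [div_le_iff₀ hpow]
    have hinv : ((1:ℝ)/p) ^ (j+1) = (p ^ (j+1))⁻¹ := by rw [one_div, inv_pow]
    calc Real.log (dd p (j + 1)) ≤ (j + 1) * Real.log p + A := hlog
      _ = (Real.log p * (((j:ℝ)+1) * (1/p) ^ (j+1)) + A * (1/p) ^ (j+1)) * p ^ (j+1) := by
          rw [hinv]; field_simp; try ring
  -- sum the bound
  have hsum : TT p k ≤ ∑ j ∈ Finset.range k,
      (Real.log p * ((j+1) * (1/p) ^ (j+1)) + A * (1/p) ^ (j+1)) :=
    Finset.sum_le_sum fun j _ => hterm j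
  -- extend to range (k+1) and compare to tsum
  have hg : ∀ n : ℕ, 0 ≤ Real.log p * (n * (1/p) ^ n) + A * (1/p) ^ n := by
    intro n; positivity
  have hshift : (∑ j ∈ Finset.range k,
      (Real.log p * (((j:ℝ)+1) * (1/p) ^ (j+1)) + A * (1/p) ^ (j+1)))
      ≤ ∑ n ∈ Finset.range (k+1), (Real.log p * (n * (1/p) ^ n) + A * (1/p) ^ n) := by
    rw [Finset.sum_range_succ' (fun n => Real.log p * (n * (1/p) ^ n) + A * (1/p) ^ n) k]
    push_cast
    simp only [pow_zero, Nat.cast_zero, mul_one, zero_mul, mul_zero, zero_add]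
    nlinarith [hA0]
  have hs1 : HasSum (fun n : ℕ => (n:ℝ) * (1/p) ^ n) ((1/p) / (1 - 1/p) ^ 2) := by
    have := hasSum_coe_mul_geometric_of_norm_lt_one (r := 1/p) (by
      rw [Real.norm_eq_abs, abs_of_nonneg hr0]; exact hr1)
    simpa using this
  have hs2 : HasSum (fun n : ℕ => (1/p) ^ n) ((1 - 1/p)⁻¹) :=
    hasSum_geometric_of_lt_one hr0 hr1
  have hs : HasSum (fun n : ℕ => Real.log p * (n * (1/p) ^ n) + A * (1/p) ^ n)
      (Real.log p * ((1/p) / (1 - 1/p) ^ 2) + A * (1 - 1/p)⁻¹) := by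
    have h1 := hs1.mul_left (Real.log p)
    have h2 := hs2.mul_left A
    exact h1.add h2
  have htsum : (∑ n ∈ Finset.range (k+1),
      (Real.log p * (n * (1/p) ^ n) + A * (1/p) ^ n))
      ≤ Real.log p * ((1/p) / (1 - 1/p) ^ 2) + A * (1 - 1/p)⁻¹ :=
    sum_le_hasSum _ (fun n _ => hg n) hs
  have heq : Real.log p * ((1/p) / (1 - 1/p) ^ 2) + A * (1 - 1/p)⁻¹ = SS p := by
    rw [SS]
    have h1 : p - 1 ≠ 0 := by linarith
    have h2 : p ≠ 0 := by linarith
    have h3 : 1 - 1/p = (p-1)/p := by field_simp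
    rw [h3]
    field_simp
    try ring
  calc TT p k ≤ _ := hsum
    _ ≤ _ := hshift
    _ ≤ _ := htsum
    _ = SS p := heq

lemma key_real (hp : 1 < p) {t a M : ℝ} (ht : 0 < t) (ha : 0 ≤ a) (hM : 1 ≤ M)
    (h : ∀ k : ℕ, cc p k * t ^ dd p k * a ^ (p ^ k) ≤ M) :
    t ^ (1 / (p - 1)) * a ≤ Real.exp (SS p) := by
  rcases ha.eq_or_lt with rfl | ha'
  · simp [Real.exp_nonneg, (Real.exp_pos _).le]
  have hp1 : (0:ℝ) < p - 1 := by linarith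
  have hp0 : (0:ℝ) < p := by linarith
  -- logarithmic inequality for each k
  have hkey : ∀ k : ℕ, (1 / (p - 1)) * Real.log t + Real.log a ≤
      SS p + (1/p) ^ k * (Real.log M + Real.log t / (p - 1)) := by
    intro k
    have hpk : (0:ℝ) < p ^ k := by positivity
    have hc := cc_pos hp k
    have htd : 0 < t ^ dd p k := Real.rpow_pos_of_pos ht _
    have hap : 0 < a ^ (p ^ k) := Real.rpow_pos_of_pos ha' _
    have hlog := Real.log_le_log (mul_pos (mul_pos hc htd) hap) (h k)
    rw [Real.log_mul (mul_pos hc htd).ne' hap.ne',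
      Real.log_mul hc.ne' htd.ne',
      Real.log_rpow ht, Real.log_rpow ha', log_cc hp k] at hlog
    have hdk : dd p k = (p ^ k - 1) / (p - 1) := rfl
    have hTT := TT_le hp k
    set L := Real.log t with hL
    have hX : dd p k * L = p ^ k * (L / (p - 1)) - L / (p - 1) := by
      rw [hdk]; field_simp
    rw [hX] at hlog
    have hTS : p ^ k * TT p k ≤ p ^ k * SS p :=
      mul_le_mul_of_nonneg_left hTT hpk.le
    have hone : p ^ k * ((1/p) ^ k * (Real.log M + L / (p - 1)))
        = Real.log M + L / (p - 1) := by
      have hpp : p ^ k * (1/p) ^ k = 1 := by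
        rw [← mul_pow]; field_simp; exact one_pow k
      calc p ^ k * ((1/p) ^ k * (Real.log M + L / (p - 1)))
          = (p ^ k * (1/p) ^ k) * (Real.log M + L / (p - 1)) := by ring
        _ = Real.log M + L / (p - 1) := by rw [hpp, one_mul]
    have h2 : p ^ k * (SS p + (1/p) ^ k * (Real.log M + L / (p - 1)))
        = p ^ k * SS p + (Real.log M + L / (p - 1)) := by
      rw [mul_add, hone]
    refine le_of_mul_le_mul_left ?_ hpk
    rw [h2]
    have e : p ^ k * (1/(p-1) * L + Real.log a)
        = (p ^ k * (L/(p-1))) + p ^ k * Real.log a := by ring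
    rw [e]
    linarith [hlog, hTS]
  -- pass to the limit
  have hlim : Filter.Tendsto
      (fun k : ℕ => SS p + (1/p) ^ k * (Real.log M + Real.log t / (p - 1)))
      Filter.atTop (nhds (SS p)) := by
    have h0 : Filter.Tendsto (fun k : ℕ => (1/p) ^ k) Filter.atTop (nhds 0) := by
      apply tendsto_pow_atTop_nhds_zero_of_lt_one (by positivity)
      rw [div_lt_one hp0]; exact hp
    have := (h0.mul_const (Real.log M + Real.log t / (p - 1))).const_add (SS p)
    simpa using this
  have hfin : (1 / (p - 1)) * Real.log t + Real.log a ≤ SS p :=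
    le_of_tendsto_of_tendsto' tendsto_const_nhds hlim (fun k => hkey k)
  have hpos : 0 < t ^ (1 / (p - 1)) * a :=
    mul_pos (Real.rpow_pos_of_pos ht _) ha'
  rw [← Real.exp_log hpos]
  apply Real.exp_le_exp.2
  rw [Real.log_mul (Real.rpow_pos_of_pos ht _).ne' ha'.ne', Real.log_rpow ht]
  · linarith [hfin]
lemma lint_rpow {r t : ℝ} (hr : 0 ≤ r) (ht : 0 < t) :
    ∫⁻ s in Ioo (0:ℝ) t, ENNReal.ofReal (s ^ r) =
      ENNReal.ofReal (t ^ (r + 1) / (r + 1)) := by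
  have hr1 : (-1:ℝ) < r := by linarith
  have hii : IntervalIntegrable (fun s : ℝ => s ^ r) volume 0 t :=
    intervalIntegral.intervalIntegrable_rpow' hr1
  have hInt : IntegrableOn (fun s : ℝ => s ^ r) (Ioo (0:ℝ) t) volume :=
    hii.1.mono_set Ioo_subset_Ioc_self
  have hnn : 0 ≤ᵐ[volume.restrict (Ioo (0:ℝ) t)] fun s : ℝ => s ^ r :=
    (ae_restrict_iff' measurableSet_Ioo).2
      (ae_of_all _ fun s hs => Real.rpow_nonneg hs.1.le r)
  rw [← ofReal_integral_eq_lintegral_ofReal hInt hnn]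
  congr 1
  rw [← integral_Ioc_eq_integral_Ioo, ← intervalIntegral.integral_of_le ht.le,
    integral_rpow (Or.inl hr1), Real.zero_rpow (by linarith : r + 1 ≠ 0)]
  ring

lemma aux_main (p : ℝ) (hp : 1 < p) (n : ℕ)
    (w : EuclideanSpace ℝ (Fin n) → ℝ) (hw0 : ∀ x, 0 ≤ w x) (hwm : Measurable w)
    (Γ : EuclideanSpace ℝ (Fin n) → EuclideanSpace ℝ (Fin n) → ℝ → ℝ)
    (hΓm : Measurable (fun q : (EuclideanSpace ℝ (Fin n)) × (EuclideanSpace ℝ (Fin n)) × ℝ =>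
      Γ q.1 q.2.1 q.2.2))
    (hΓ0 : ∀ x y t, 0 ≤ Γ x y t)
    (hK1 : ∀ (x y : EuclideanSpace ℝ (Fin n)) (t : ℝ), 0 < t →
      (∫⁻ z, ENNReal.ofReal (Γ z y t * w z)) = 1 ∧ (∫⁻ z, ENNReal.ofReal (Γ x z t * w z)) = 1)
    (hK2 : ∀ (x y : EuclideanSpace ℝ (Fin n)) (s t : ℝ), 0 < s → s < t →
      ENNReal.ofReal (Γ x y t) = ∫⁻ ξ, ENNReal.ofReal (Γ x ξ (t - s) * Γ ξ y s * w ξ))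
    (u₀ : EuclideanSpace ℝ (Fin n) → ℝ) (hu₀m : Measurable u₀) (hu₀0 : ∀ x, 0 ≤ u₀ x)
    (u : EuclideanSpace ℝ (Fin n) → ℝ → ℝ) (T : ENNReal)
    (hum : Measurable (Function.uncurry u)) (hu0 : ∀ x t, 0 ≤ u x t)
    (M : ℝ) (hM : ∀ t : ℝ, 0 < t → ENNReal.ofReal t < T →
      ∀ᵐ x ∂(volume : Measure (EuclideanSpace ℝ (Fin n))), u x t ≤ M)
    (hequ : ∀ t : ℝ, 0 < t → ENNReal.ofReal t < T →
      ∀ᵐ x ∂(volume : Measure (EuclideanSpace ℝ (Fin n))),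
        ENNReal.ofReal (u x t) =
          (∫⁻ y, ENNReal.ofReal (Γ x y t * u₀ y * w y)) +
          ∫⁻ s in Ioo (0 : ℝ) t, ∫⁻ y, ENNReal.ofReal (Γ x y (t - s) * u y s ^ p * w y))
    (t : ℝ) (ht : 0 < t) (htT : ENNReal.ofReal t < T) :
    ∀ᵐ x ∂(volume : Measure (EuclideanSpace ℝ (Fin n))),
      ENNReal.ofReal (t ^ (1 / (p - 1))) *
          (∫⁻ y, ENNReal.ofReal (Γ x y t * u₀ y * w y))
        ≤ ENNReal.ofReal (Real.exp (SS p)) := by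
  have hp0 : (0:ℝ) < p := by linarith
  set G : EuclideanSpace ℝ (Fin n) → ℝ → ℝ≥0∞ :=
    fun x τ => ∫⁻ y, ENNReal.ofReal (Γ x y τ * u₀ y * w y) with hG
  have hΓym : ∀ (x : EuclideanSpace ℝ (Fin n)) (τ : ℝ),
      Measurable fun y => ENNReal.ofReal (Γ x y τ * w y) := by
    intro x τ
    apply ENNReal.measurable_ofReal.comp
    exact (hΓm.comp (measurable_const.prodMk
      (measurable_id.prodMk measurable_const))).mul hwm
  have hGm : ∀ s : ℝ, Measurable fun y => G y s := by
    intro s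
    have h1 : Measurable fun q : (EuclideanSpace ℝ (Fin n)) × (EuclideanSpace ℝ (Fin n)) =>
        ENNReal.ofReal (Γ q.1 q.2 s * u₀ q.2 * w q.2) := by
      apply ENNReal.measurable_ofReal.comp
      exact ((hΓm.comp (measurable_fst.prodMk (measurable_snd.prodMk
        measurable_const))).mul (hu₀m.comp measurable_snd)).mul (hwm.comp measurable_snd)
    exact h1.lintegral_prod_right'
  have hjen : ∀ (x : EuclideanSpace ℝ (Fin n)) (τ : ℝ), 0 < τ →
      ∀ f : EuclideanSpace ℝ (Fin n) → ℝ≥0∞, Measurable f → ∀ e : ℝ, 1 ≤ e →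
      (∫⁻ y, ENNReal.ofReal (Γ x y τ * w y) * f y) ^ e
        ≤ ∫⁻ y, ENNReal.ofReal (Γ x y τ * w y) * f y ^ e := by
    intro x τ hτ f hf e he
    have hpm : IsProbabilityMeasure
        (volume.withDensity fun y => ENNReal.ofReal (Γ x y τ * w y)) := by
      constructor
      rw [withDensity_apply _ MeasurableSet.univ, setLIntegral_univ]
      exact (hK1 x x τ hτ).2
    have h1 := lintegral_withDensity_eq_lintegral_mul volume (hΓym x τ) hf
    have h2 := lintegral_withDensity_eq_lintegral_mul volume (hΓym x τ)
      (hf.pow measurable_const : Measurable fun y => f y ^ e)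
    simp only [Pi.mul_apply] at h1 h2
    rw [← h1, ← h2]
    exact my_jensen _ hf.aemeasurable he
  have hsg : ∀ (x : EuclideanSpace ℝ (Fin n)) (s t' : ℝ), 0 < s → s < t' →
      ∫⁻ y, ENNReal.ofReal (Γ x y (t' - s) * w y) * G y s = G x t' := by
    intro x s t' hs hst
    calc ∫⁻ y, ENNReal.ofReal (Γ x y (t' - s) * w y) * G y s
        = ∫⁻ y, ∫⁻ z, ENNReal.ofReal (Γ x y (t' - s) * w y) *
            ENNReal.ofReal (Γ y z s * u₀ z * w z) := by
          refine lintegral_congr fun y => ?_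
          exact (lintegral_const_mul' _ _ ENNReal.ofReal_ne_top).symm
      _ = ∫⁻ y, ∫⁻ z, ENNReal.ofReal ((Γ x y (t' - s) * Γ y z s * w y) * (u₀ z * w z)) := by
          refine lintegral_congr fun y => lintegral_congr fun z => ?_
          rw [← ENNReal.ofReal_mul (mul_nonneg (hΓ0 _ _ _) (hw0 _))]
          congr 1; ring
      _ = ∫⁻ z, ∫⁻ y, ENNReal.ofReal ((Γ x y (t' - s) * Γ y z s * w y) * (u₀ z * w z)) := by
          apply lintegral_lintegral_swap
          apply Measurable.aemeasurable
          apply ENNReal.measurable_ofReal.comp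
          have h1 : Measurable fun q : (EuclideanSpace ℝ (Fin n)) × (EuclideanSpace ℝ (Fin n)) =>
              Γ x q.1 (t' - s) :=
            hΓm.comp (measurable_const.prodMk (measurable_fst.prodMk measurable_const))
          have h2 : Measurable fun q : (EuclideanSpace ℝ (Fin n)) × (EuclideanSpace ℝ (Fin n)) =>
              Γ q.1 q.2 s :=
            hΓm.comp (measurable_fst.prodMk (measurable_snd.prodMk measurable_const))
          exact ((h1.mul h2).mul (hwm.comp measurable_fst)).mul
            ((hu₀m.comp measurable_snd).mul (hwm.comp measurable_snd))
      _ = ∫⁻ z, ENNReal.ofReal (Γ x z t' * u₀ z * w z) := by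
          refine lintegral_congr fun z => ?_
          calc ∫⁻ y, ENNReal.ofReal ((Γ x y (t' - s) * Γ y z s * w y) * (u₀ z * w z))
              = ∫⁻ y, ENNReal.ofReal (Γ x y (t' - s) * Γ y z s * w y) *
                  ENNReal.ofReal (u₀ z * w z) := by
                refine lintegral_congr fun y => ?_
                rw [ENNReal.ofReal_mul (mul_nonneg (mul_nonneg (hΓ0 _ _ _) (hΓ0 _ _ _)) (hw0 _))]
            _ = ENNReal.ofReal (Γ x z t') * ENNReal.ofReal (u₀ z * w z) := by
                rw [lintegral_mul_const' _ _ ENNReal.ofReal_ne_top, ← hK2 x z s t' hs hst]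
            _ = ENNReal.ofReal (Γ x z t' * u₀ z * w z) := by
                rw [← ENNReal.ofReal_mul (hΓ0 _ _ _), mul_assoc]
      _ = G x t' := rfl
  -- main induction
  have main : ∀ k : ℕ, ∀ t : ℝ, 0 < t → ENNReal.ofReal t < T →
      ∀ᵐ x ∂(volume : Measure (EuclideanSpace ℝ (Fin n))),
        ENNReal.ofReal (cc p k * t ^ dd p k) * G x t ^ (p ^ k)
          ≤ ENNReal.ofReal (u x t) := by
    intro k
    induction k with
    | zero =>
        intro t ht htT
        filter_upwards [hequ t ht htT] with x hx
        have h1 : cc p 0 * t ^ dd p 0 = 1 := by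
          rw [show cc p 0 = 1 from rfl, dd_zero, Real.rpow_zero, one_mul]
        rw [h1, pow_zero, ENNReal.rpow_one, ENNReal.ofReal_one, one_mul, hx]
        exact self_le_add_right _ _
    | succ k ih =>
        intro t ht htT
        filter_upwards [hequ t ht htT] with x hx
        have hstep : ∀ s ∈ Ioo (0:ℝ) t,
            ENNReal.ofReal (cc p k ^ p * s ^ (dd p k * p)) * G x t ^ (p ^ (k+1))
              ≤ ∫⁻ y, ENNReal.ofReal (Γ x y (t - s) * u y s ^ p * w y) := by
          intro s hs
          have hts : 0 < t - s := by linarith [hs.2]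
          have hsT : ENNReal.ofReal s < T :=
            lt_of_le_of_lt (ENNReal.ofReal_le_ofReal hs.2.le) htT
          have hihs := ih s hs.1 hsT
          have hb1 : ∫⁻ y, ENNReal.ofReal (Γ x y (t - s) * u y s ^ p * w y)
              = ∫⁻ y, ENNReal.ofReal (Γ x y (t - s) * w y) * ENNReal.ofReal (u y s) ^ p := by
            refine lintegral_congr fun y => ?_
            rw [show Γ x y (t - s) * u y s ^ p * w y
                = (Γ x y (t - s) * w y) * u y s ^ p by ring,
              ENNReal.ofReal_mul (mul_nonneg (hΓ0 _ _ _) (hw0 _)),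
              ← ENNReal.ofReal_rpow_of_nonneg (hu0 y s) hp0.le]
          have hb3 : ∀ y : EuclideanSpace ℝ (Fin n),
              (ENNReal.ofReal (cc p k * s ^ dd p k) * G y s ^ (p ^ k)) ^ p
              = ENNReal.ofReal (cc p k ^ p * s ^ (dd p k * p)) * (G y s ^ (p ^ k)) ^ p := by
            intro y
            rw [ENNReal.mul_rpow_of_nonneg _ _ hp0.le,
              ENNReal.ofReal_rpow_of_nonneg
                (mul_nonneg (cc_pos hp k).le (Real.rpow_nonneg hs.1.le _)) hp0.le,
              Real.mul_rpow (cc_pos hp k).le (Real.rpow_nonneg hs.1.le _),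
              ← Real.rpow_mul hs.1.le]
          have hb2 : ∫⁻ y, ENNReal.ofReal (Γ x y (t - s) * w y) *
                ENNReal.ofReal (cc p k ^ p * s ^ (dd p k * p)) * (G y s ^ (p ^ k)) ^ p
              ≤ ∫⁻ y, ENNReal.ofReal (Γ x y (t - s) * w y) * ENNReal.ofReal (u y s) ^ p := by
            refine lintegral_mono_ae ?_
            filter_upwards [hihs] with y hy
            calc ENNReal.ofReal (Γ x y (t - s) * w y) *
                  ENNReal.ofReal (cc p k ^ p * s ^ (dd p k * p)) * (G y s ^ (p ^ k)) ^ p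
                = ENNReal.ofReal (Γ x y (t - s) * w y) *
                  (ENNReal.ofReal (cc p k * s ^ dd p k) * G y s ^ (p ^ k)) ^ p := by
                  rw [hb3 y]; ring
              _ ≤ ENNReal.ofReal (Γ x y (t - s) * w y) * ENNReal.ofReal (u y s) ^ p :=
                  mul_le_mul_right (ENNReal.rpow_le_rpow hy hp0.le) _
          -- Jensen chain
          have hGx : (∫⁻ y, ENNReal.ofReal (Γ x y (t - s) * w y) * G y s) = G x t :=
            hsg x s t hs.1 hs.2
          have hpk1 : (1:ℝ) ≤ p ^ k := one_le_pow₀ hp.le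
          have hj1 : (G x t) ^ (p ^ k)
              ≤ ∫⁻ y, ENNReal.ofReal (Γ x y (t - s) * w y) * G y s ^ (p ^ k) := by
            rw [← hGx]
            exact hjen x (t - s) hts _ (hGm s) _ hpk1
          have hj2 : (G x t) ^ (p ^ k * p)
              ≤ ∫⁻ y, ENNReal.ofReal (Γ x y (t - s) * w y) * (G y s ^ (p ^ k)) ^ p := by
            calc (G x t) ^ (p ^ k * p) = ((G x t) ^ (p ^ k)) ^ p := ENNReal.rpow_mul _ _ _
              _ ≤ (∫⁻ y, ENNReal.ofReal (Γ x y (t - s) * w y) * G y s ^ (p ^ k)) ^ p :=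
                  ENNReal.rpow_le_rpow hj1 hp0.le
              _ ≤ ∫⁻ y, ENNReal.ofReal (Γ x y (t - s) * w y) * (G y s ^ (p ^ k)) ^ p :=
                  hjen x (t - s) hts _ ((hGm s).pow measurable_const) p hp.le
          calc ENNReal.ofReal (cc p k ^ p * s ^ (dd p k * p)) * G x t ^ (p ^ (k+1))
              = ENNReal.ofReal (cc p k ^ p * s ^ (dd p k * p)) * G x t ^ (p ^ k * p) := by
                rw [← pow_succ]
            _ ≤ ENNReal.ofReal (cc p k ^ p * s ^ (dd p k * p)) *
                ∫⁻ y, ENNReal.ofReal (Γ x y (t - s) * w y) * (G y s ^ (p ^ k)) ^ p :=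
                mul_le_mul_right hj2 _
            _ = ∫⁻ y, ENNReal.ofReal (Γ x y (t - s) * w y) *
                ENNReal.ofReal (cc p k ^ p * s ^ (dd p k * p)) * (G y s ^ (p ^ k)) ^ p := by
                rw [← lintegral_const_mul' _ _ ENNReal.ofReal_ne_top]
                refine lintegral_congr fun y => ?_
                ring
            _ ≤ ∫⁻ y, ENNReal.ofReal (Γ x y (t - s) * w y) * ENNReal.ofReal (u y s) ^ p := hb2
            _ = ∫⁻ y, ENNReal.ofReal (Γ x y (t - s) * u y s ^ p * w y) := hb1.symm
        -- integrate over s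
        have houter : ∫⁻ s in Ioo (0:ℝ) t,
              ENNReal.ofReal (cc p k ^ p * s ^ (dd p k * p)) * G x t ^ (p ^ (k+1))
            ≤ ∫⁻ s in Ioo (0:ℝ) t, ∫⁻ y, ENNReal.ofReal (Γ x y (t - s) * u y s ^ p * w y) :=
          lintegral_mono_ae ((ae_restrict_iff' measurableSet_Ioo).2
            (ae_of_all _ fun s hs => hstep s hs))
        have hcompute : ∫⁻ s in Ioo (0:ℝ) t,
              ENNReal.ofReal (cc p k ^ p * s ^ (dd p k * p)) * G x t ^ (p ^ (k+1))
            = ENNReal.ofReal (cc p (k+1) * t ^ dd p (k+1)) * G x t ^ (p ^ (k+1)) := by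
          have hmeas : Measurable fun s : ℝ => ENNReal.ofReal (cc p k ^ p * s ^ (dd p k * p)) :=
            ENNReal.measurable_ofReal.comp
              (measurable_const.mul (measurable_id.pow measurable_const))
          rw [lintegral_mul_const _ hmeas]
          congr 1
          have hsplit : ∀ s : ℝ, ENNReal.ofReal (cc p k ^ p * s ^ (dd p k * p))
              = ENNReal.ofReal (cc p k ^ p) * ENNReal.ofReal (s ^ (dd p k * p)) := fun s =>
            ENNReal.ofReal_mul (Real.rpow_nonneg (cc_pos hp k).le p)
          simp_rw [hsplit]
          rw [lintegral_const_mul' _ _ ENNReal.ofReal_ne_top,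
            lint_rpow (mul_nonneg (dd_nonneg hp k) hp0.le) ht,
            ← ENNReal.ofReal_mul (Real.rpow_nonneg (cc_pos hp k).le p)]
          congr 1
          have hd : dd p k * p + 1 = dd p (k+1) := by rw [dd_succ hp k]; ring
          have hdpos : 0 < dd p k * p + 1 := by
            have := dd_nonneg hp k; nlinarith
          rw [show cc p (k+1) = cc p k ^ p / dd p (k+1) from rfl, ← hd, hd]
          rw [← hd]
          field_simp
        rw [hx]
        calc ENNReal.ofReal (cc p (k+1) * t ^ dd p (k+1)) * G x t ^ (p ^ (k+1))
            = ∫⁻ s in Ioo (0:ℝ) t,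
                ENNReal.ofReal (cc p k ^ p * s ^ (dd p k * p)) * G x t ^ (p ^ (k+1)) :=
              hcompute.symm
          _ ≤ ∫⁻ s in Ioo (0:ℝ) t, ∫⁻ y,
                ENNReal.ofReal (Γ x y (t - s) * u y s ^ p * w y) := houter
          _ ≤ (∫⁻ y, ENNReal.ofReal (Γ x y t * u₀ y * w y)) +
              ∫⁻ s in Ioo (0:ℝ) t, ∫⁻ y,
                ENNReal.ofReal (Γ x y (t - s) * u y s ^ p * w y) := le_add_self
  -- conclusion
  have hae : ∀ᵐ x ∂(volume : Measure (EuclideanSpace ℝ (Fin n))), ∀ k : ℕ,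
      ENNReal.ofReal (cc p k * t ^ dd p k) * G x t ^ (p ^ k) ≤ ENNReal.ofReal (u x t) :=
    ae_all_iff.2 fun k => main k t ht htT
  filter_upwards [hae, hM t ht htT, hequ t ht htT] with x hx hxM hxe
  have hle : G x t ≤ ENNReal.ofReal (u x t) := by
    rw [hxe]; exact self_le_add_right _ _
  have hfin : G x t ≠ ⊤ := ne_top_of_le_ne_top ENNReal.ofReal_ne_top hle
  set g := (G x t).toReal with hgdef
  have hG' : G x t = ENNReal.ofReal g := (ENNReal.ofReal_toReal hfin).symm
  have hreal : ∀ k : ℕ, cc p k * t ^ dd p k * g ^ (p ^ k) ≤ max M 1 := by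
    intro k
    have h1 := hx k
    rw [hG', ENNReal.ofReal_rpow_of_nonneg ENNReal.toReal_nonneg (pow_nonneg hp0.le k),
      ← ENNReal.ofReal_mul (mul_nonneg (cc_pos hp k).le (Real.rpow_nonneg ht.le _))] at h1
    have h2 : ENNReal.ofReal (u x t) ≤ ENNReal.ofReal (max M 1) :=
      ENNReal.ofReal_le_ofReal (le_trans hxM (le_max_left _ _))
    exact (ENNReal.ofReal_le_ofReal_iff (le_trans zero_le_one (le_max_right _ _))).1
      (le_trans h1 h2)
  have hfinal := key_real hp ht ENNReal.toReal_nonneg (le_max_right M 1) hreal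
  have hGoal : (∫⁻ y, ENNReal.ofReal (Γ x y t * u₀ y * w y)) = G x t := rfl
  rw [hGoal, hG', ← ENNReal.ofReal_mul (Real.rpow_nonneg ht.le _)]
  exact ENNReal.ofReal_le_ofReal hfinal


/-- Lemma 3.1: let `p > 1`. There is a constant `C* > 0` depending only on `p` such that:
in case (A) or (B), for any measurable `Γ ≥ 0` satisfying (K1) and (K2) and any solution
`u` of the integral equation on `ℝⁿ × (0,T)` (`0 < T ≤ ∞`) with nonnegative initial data
`u₀`, one has `t^{1/(p-1)} ‖S(t)u₀w‖_∞ ≤ C*` for all `t ∈ (0,T)`. -/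

theorem stmt_12 (p : ℝ) (hp : 1 < p) :
    ∃ C : ℝ, 0 < C ∧
      ∀ (n : ℕ) (hn : 0 < n) (α : ℝ) (w : EuclideanSpace ℝ (Fin n) → ℝ),
        CaseAB n hn α w →
        ∀ Γ : EuclideanSpace ℝ (Fin n) → EuclideanSpace ℝ (Fin n) → ℝ → ℝ,
          Measurable (fun q : (EuclideanSpace ℝ (Fin n)) × (EuclideanSpace ℝ (Fin n)) × ℝ =>
            Γ q.1 q.2.1 q.2.2) →
          (∀ x y t, 0 ≤ Γ x y t) → PropK1 w Γ → PropK2 w Γ →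
          ∀ u₀ : EuclideanSpace ℝ (Fin n) → ℝ, Measurable u₀ → (∀ x, 0 ≤ u₀ x) →
            ∀ (u : EuclideanSpace ℝ (Fin n) → ℝ → ℝ) (T : ENNReal), 0 < T →
              IsSolOn n w Γ p u₀ u T →
              ∀ t : ℝ, 0 < t → ENNReal.ofReal t < T →
                ∀ᵐ x ∂(volume : Measure (EuclideanSpace ℝ (Fin n))),
                  ENNReal.ofReal (t ^ (1 / (p - 1))) *
                      (∫⁻ y, ENNReal.ofReal (Γ x y t * u₀ y * w y))
                    ≤ ENNReal.ofReal C := by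
  refine ⟨Real.exp (SS p), Real.exp_pos _, ?_⟩
  intro n hn α w hw Γ hΓm hΓ0 hK1 hK2 u₀ hu₀m hu₀0 u T hT hsol t ht htT
  obtain ⟨hum, hu0, ⟨M, hM⟩, hequ⟩ := hsol
  have hw0 : ∀ x, 0 ≤ w x := by
    rcases hw with ⟨_, _, h3⟩ | ⟨_, _, h3⟩ <;> intro x <;> rw [h3] <;> positivity
  have hwm : Measurable w := by
    rcases hw with ⟨_, _, h3⟩ | ⟨_, _, h3⟩
    · have hwe : w = fun x => |x ⟨0, hn⟩| ^ α := funext h3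
      rw [hwe]
      exact ((EuclideanSpace.proj (⟨0, hn⟩ : Fin n) :
        EuclideanSpace ℝ (Fin n) →L[ℝ] ℝ).continuous.measurable.abs).pow measurable_const
    · have hwe : w = fun x => ‖x‖ ^ α := funext h3
      rw [hwe]
      exact measurable_norm.pow measurable_const
  exact aux_main p hp n w hw0 hwm Γ hΓm hΓ0 hK1 hK2 u₀ hu₀m hu₀0 u T hum hu0 M hM hequ t ht htT
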